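/- Let $d \ge 2$ and $t \ge 1$, and let $\{(A_i^1, \ldots, A_i^d) : 1 \le i \le t\}$ be a family of finite sets such that $A_i^j \cap A_{i'}^{j'} = \emptyset$ if and only if $i = i'$ and $j \ne j'$. Writing $k_{i,j} := |A_i^j|$ and setting $k_{i,d+1} := k_{i,1}$, we have $\sum_{j=1}^{d} \sum_{i=1}^{t} \binom{k_{i,j} + k_{i,j+1}}{k_{i,j}}^{-1} \le d$. -/

import Mathlib

open Finset

/-- Key binomial identity: `b * C(a+b,a) = (a+b) * C(a+b-1,a)` for `b ≥ 1`. -/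
lemma nat_key (a b : ℕ) (hb : 1 ≤ b) :
    b * (a + b).choose a = (a + b) * (a + (b - 1)).choose a := by
  obtain ⟨c, rfl⟩ : ∃ c, b = c + 1 := ⟨b - 1, by omega⟩
  have e1 : a + (c + 1) = (a + c) + 1 := by ring
  have e2 : a + (c + 1 - 1) = a + c := by omega
  rw [e1, e2]
  have h1 : ((a+c)+1).choose a = ((a+c)+1).choose (c+1) := by
    have : (a+c)+1 = a + (c+1) := by ring
    rw [this, Nat.choose_symm_add]
  have h2 : (a + c).choose a = (a + c).choose c := Nat.choose_symm_add
  have h3 := Nat.add_one_mul_choose_eq (a + c) c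
  rw [h1, h2, h3]
  ring

/-- Real version: `b / C(a+b-1,a) = (a+b) / C(a+b,a)` for `b ≥ 1`. -/
lemma real_key (a b : ℕ) (hb : 1 ≤ b) :
    (b : ℝ) * (((a + (b - 1)).choose a : ℝ))⁻¹
      = ((a : ℝ) + b) * (((a + b).choose a : ℝ))⁻¹ := by
  have h1 : (a + (b - 1)).choose a ≠ 0 := Nat.choose_pos (by omega) |>.ne'
  have h2 : (a + b).choose a ≠ 0 := Nat.choose_pos (by omega) |>.ne'
  have key := nat_key a b hb
  have : (b : ℝ) * ((a + b).choose a : ℝ) = ((a : ℝ) + b) * ((a + (b-1)).choose a : ℝ) := by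
    exact_mod_cast congrArg (Nat.cast : ℕ → ℝ) key
  field_simp
  linarith [this]

/-- The inner sum over the ground set for a single pair `(A, B)`. -/
lemma bollobas_inner_sum {α : Type*} [DecidableEq α] (U A B : Finset α)
    (hAU : A ⊆ U) (hBU : B ⊆ U) (hd : A ∩ B = ∅) (hB : B.Nonempty) :
    ∑ x ∈ U, (if x ∉ A then (((A.card + (B \ {x}).card).choose A.card : ℝ))⁻¹ else 0)
      = (U.card : ℝ) * (((A.card + B.card).choose A.card : ℝ))⁻¹ := by
  have hdisj : Disjoint A B := disjoint_iff_inter_eq_empty.mpr hd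
  have hABU : A ∪ B ⊆ U := union_subset hAU hBU
  have hsplit : U = (A ∪ B) ∪ (U \ (A ∪ B)) := by
    rw [union_sdiff_of_subset hABU]
  have hd1 : Disjoint (A ∪ B) (U \ (A ∪ B)) := disjoint_sdiff
  conv_lhs => rw [hsplit]
  rw [sum_union hd1, sum_union hdisj]
  have hA0 : ∑ x ∈ A, (if x ∉ A then (((A.card + (B \ {x}).card).choose A.card : ℝ))⁻¹ else 0) = 0 := by
    apply sum_eq_zero
    intro x hx
    simp [hx]
  have hBsum : ∑ x ∈ B, (if x ∉ A then (((A.card + (B \ {x}).card).choose A.card : ℝ))⁻¹ else 0)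
      = (B.card : ℝ) * (((A.card + (B.card - 1)).choose A.card : ℝ))⁻¹ := by
    rw [sum_congr rfl (fun x hx => ?_), sum_const, nsmul_eq_mul]
    have hxA : x ∉ A := fun h => disjoint_left.mp hdisj h hx
    rw [if_pos hxA]
    congr 3
    rw [sdiff_singleton_eq_erase, card_erase_of_mem hx]
  have hRsum : ∑ x ∈ U \ (A ∪ B), (if x ∉ A then (((A.card + (B \ {x}).card).choose A.card : ℝ))⁻¹ else 0)
      = ((U \ (A ∪ B)).card : ℝ) * (((A.card + B.card).choose A.card : ℝ))⁻¹ := by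
    rw [sum_congr rfl (fun x hx => ?_), sum_const, nsmul_eq_mul]
    have hx' := mem_sdiff.mp hx
    have hxA : x ∉ A := fun h => hx'.2 (mem_union_left _ h)
    have hxB : x ∉ B := fun h => hx'.2 (mem_union_right _ h)
    rw [if_pos hxA]
    congr 3
    rw [sdiff_singleton_eq_erase, erase_eq_of_notMem hxB]
  rw [hA0, hBsum, hRsum, zero_add]
  have hcardU : (A ∪ B).card = A.card + B.card := card_union_of_disjoint hdisj
  have hle : A.card + B.card ≤ U.card := hcardU ▸ card_le_card hABU
  have hcsd : ((U \ (A ∪ B)).card : ℝ) = (U.card : ℝ) - (A.card + B.card) := by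
    rw [card_sdiff_of_subset hABU, hcardU]
    push_cast [Nat.cast_sub hle]
    ring
  rw [hcsd, real_key A.card B.card (by exact_mod_cast hB.card_pos)]
  ring

/-- **Bollobás set-pair inequality** (uniform, real form), by induction on the
ground set. -/
lemma bollobas {α ι : Type*} [DecidableEq α] [DecidableEq ι] (n : ℕ) :
    ∀ (s : Finset ι) (A B : ι → Finset α),
    (s.biUnion fun i => A i ∪ B i).card ≤ n →
    (∀ i ∈ s, A i ∩ B i = ∅) →
    (∀ i ∈ s, ∀ j ∈ s, i ≠ j → (A i ∩ B j).Nonempty) →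
    ∑ i ∈ s, ((((A i).card + (B i).card).choose (A i).card : ℝ))⁻¹ ≤ 1 := by
  induction n with
  | zero =>
      intro s A B hU hdisj hcross
      rcases s.eq_empty_or_nonempty with rfl | ⟨i, hi⟩
      · simp
      have hUe : (s.biUnion fun i => A i ∪ B i) = ∅ := card_eq_zero.mp (Nat.le_zero.mp hU)
      have hBe : ∀ j ∈ s, B j = ∅ := by
        intro j hj
        rw [← subset_empty, ← hUe]
        exact fun x hx => mem_biUnion.mpr ⟨j, hj, mem_union_right _ hx⟩
      have hAe : ∀ j ∈ s, A j = ∅ := by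
        intro j hj
        rw [← subset_empty, ← hUe]
        exact fun x hx => mem_biUnion.mpr ⟨j, hj, mem_union_left _ hx⟩
      have hs : s = {i} := by
        apply eq_singleton_iff_unique_mem.mpr ⟨hi, fun j hj => ?_⟩
        by_contra hne
        obtain ⟨x, hx⟩ := hcross j hj i hi hne
        rw [hBe i hi, inter_empty] at hx
        exact notMem_empty x hx
      rw [hs, sum_singleton, hAe i hi, hBe i hi]
      simp
  | succ n ih =>
      intro s A B hU hdisj hcross
      rcases s.eq_empty_or_nonempty with rfl | hsne
      · simp
      by_cases hBemp : ∃ i ∈ s, B i = ∅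
      · obtain ⟨i, hi, hBi⟩ := hBemp
        have hs : s = {i} := by
          apply eq_singleton_iff_unique_mem.mpr ⟨hi, fun j hj => ?_⟩
          by_contra hne
          obtain ⟨x, hx⟩ := hcross j hj i hi hne
          rw [hBi, inter_empty] at hx
          exact notMem_empty x hx
        rw [hs, sum_singleton, hBi]
        simp
      push_neg at hBemp
      set U := s.biUnion fun i => A i ∪ B i with hUdef
      have hUne : U.Nonempty := by
        obtain ⟨i, hi⟩ := hsne
        obtain ⟨x, hx⟩ := (hBemp i hi)
        exact ⟨x, mem_biUnion.mpr ⟨i, hi, mem_union_right _ hx⟩⟩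
      -- For each x in U, apply the induction hypothesis
      have hstep : ∀ x ∈ U,
          ∑ i ∈ s, (if x ∉ A i then
            ((((A i).card + (B i \ {x}).card).choose (A i).card : ℝ))⁻¹ else 0) ≤ 1 := by
        intro x hxU
        have := ih (s.filter fun i => x ∉ A i) A (fun i => B i \ {x}) ?_ ?_ ?_
        · rw [← sum_filter]; exact this
        · -- ground set bound
          have hsub : ((s.filter fun i => x ∉ A i).biUnion fun i => A i ∪ (B i \ {x}))
              ⊆ U.erase x := by
            intro y hy
            obtain ⟨i, hi, hyi⟩ := mem_biUnion.mp hy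
            have hi' := mem_filter.mp hi
            refine mem_erase.mpr ⟨?_, mem_biUnion.mpr ⟨i, hi'.1, ?_⟩⟩
            · rintro rfl
              rcases mem_union.mp hyi with h | h
              · exact hi'.2 h
              · exact (mem_sdiff.mp h).2 (mem_singleton_self y)
            · rcases mem_union.mp hyi with h | h
              · exact mem_union_left _ h
              · exact mem_union_right _ (mem_sdiff.mp h).1
          calc _ ≤ (U.erase x).card := card_le_card hsub
            _ = U.card - 1 := card_erase_of_mem hxU
            _ ≤ n := by omega
        · intro i hi
          rw [← subset_empty]
          calc A i ∩ (B i \ {x}) ⊆ A i ∩ B i := inter_subset_inter Subset.rfl sdiff_subset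
            _ = ∅ := hdisj i (mem_filter.mp hi).1
        · intro i hi j hj hne
          obtain ⟨y, hy⟩ := hcross i (mem_filter.mp hi).1 j (mem_filter.mp hj).1 hne
          have hyA := (mem_inter.mp hy).1
          have hyB := (mem_inter.mp hy).2
          refine ⟨y, mem_inter.mpr ⟨hyA, mem_sdiff.mpr ⟨hyB, ?_⟩⟩⟩
          intro hyx
          exact (mem_filter.mp hi).2 (mem_singleton.mp hyx ▸ hyA)
      -- Sum over x ∈ U
      have htot : ∑ x ∈ U, ∑ i ∈ s, (if x ∉ A i then
          ((((A i).card + (B i \ {x}).card).choose (A i).card : ℝ))⁻¹ else 0)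
          ≤ (U.card : ℝ) := by
        calc _ ≤ ∑ _x ∈ U, (1 : ℝ) := sum_le_sum hstep
          _ = (U.card : ℝ) := by simp
      rw [sum_comm] at htot
      have hinner : ∀ i ∈ s,
          ∑ x ∈ U, (if x ∉ A i then
            ((((A i).card + (B i \ {x}).card).choose (A i).card : ℝ))⁻¹ else 0)
          = (U.card : ℝ) * ((((A i).card + (B i).card).choose (A i).card : ℝ))⁻¹ := by
        intro i hi
        apply bollobas_inner_sum
        · exact fun x hx => mem_biUnion.mpr ⟨i, hi, mem_union_left _ hx⟩
        · exact fun x hx => mem_biUnion.mpr ⟨i, hi, mem_union_right _ hx⟩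
        · exact hdisj i hi
        · exact (hBemp i hi)
      rw [sum_congr rfl hinner, ← mul_sum] at htot
      have hUpos : (0 : ℝ) < U.card := by exact_mod_cast hUne.card_pos
      have h1 : (U.card : ℝ) * (∑ i ∈ s, ((((A i).card + (B i).card).choose (A i).card : ℝ))⁻¹)
          ≤ (U.card : ℝ) * 1 := by rw [mul_one]; exact htot
      exact le_of_mul_le_mul_left h1 hUpos

/-- **Theorem (cyclic Bollobás inequalities summed).** Let `d ≥ 2`, `t ≥ 1`, and
let `{(A i 1, …, A i d) : 1 ≤ i ≤ t}` be finite sets with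
`A i j ∩ A i' j' = ∅` iff `i = i'` and `j ≠ j'`. Writing `k i j := |A i j|`
and interpreting the column index cyclically (`k i (d+1) := k i 1`), we have
`∑_{j=1}^{d} ∑_{i=1}^{t} C(k i j + k i (j+1), k i j)⁻¹ ≤ d`. -/
theorem stmt9 {α : Type*} [DecidableEq α] (d t : ℕ) (hd : 2 ≤ d) (ht : 1 ≤ t)
    (A : Fin t → Fin d → Finset α)
    (hA : ∀ (i i' : Fin t) (j j' : Fin d),
      A i j ∩ A i' j' = ∅ ↔ (i = i' ∧ j ≠ j')) :
    ∑ j : Fin d, ∑ i : Fin t,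
      ((Nat.choose
          ((A i j).card +
            (A i ⟨((j : ℕ) + 1) % d, Nat.mod_lt _ (by omega)⟩).card)
          ((A i j).card) : ℝ))⁻¹ ≤ (d : ℝ) := by
  have key : ∀ j : Fin d, ∑ i : Fin t,
      ((Nat.choose
          ((A i j).card +
            (A i ⟨((j : ℕ) + 1) % d, Nat.mod_lt _ (by omega)⟩).card)
          ((A i j).card) : ℝ))⁻¹ ≤ 1 := by
    intro j
    set j' : Fin d := ⟨((j : ℕ) + 1) % d, Nat.mod_lt _ (by omega)⟩ with hj'
    have hne : j ≠ j' := by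
      intro h
      apply_fun (Fin.val) at h
      rw [hj'] at h
      simp only at h
      rcases Nat.lt_or_ge ((j : ℕ) + 1) d with hlt | hge
      · rw [Nat.mod_eq_of_lt hlt] at h; omega
      · have : (j : ℕ) + 1 = d := by have := j.isLt; omega
        rw [this, Nat.mod_self] at h
        have := j.isLt; omega
    exact bollobas ((univ : Finset (Fin t)).biUnion fun i => A i j ∪ A i j').card
      univ (fun i => A i j) (fun i => A i j') le_rfl
      (fun i _ => (hA i i j j').mpr ⟨rfl, hne⟩)
      (fun i _ i' _ hne' => nonempty_iff_ne_empty.mpr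
        (fun h => hne' (((hA i i' j j').mp h).1)))
  calc ∑ j : Fin d, ∑ i : Fin t, _ ≤ ∑ _j : Fin d, (1 : ℝ) := sum_le_sum (fun j _ => key j)
    _ = (d : ℝ) := by simp
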